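/- Positivity of the first-order well-balanced DG scheme with the modified Lax–Friedrichs flux (Theorem B.1): let Ū_{j−1}, Ū_j = (ρ̄_j, m̄_j, Ē_j), Ū_{j+1} ∈ G, let ρ̄^e_{j−1}, ρ̄^e_j, ρ̄^e_{j+1} > 0, let ρ^{e,max}_{j−1/2} ≥ max{ρ̄^e_{j−1}, ρ̄^e_j} and ρ^{e,max}_{j+1/2} ≥ max{ρ̄^e_j, ρ̄^e_{j+1}}, set the viscosity parameters α^{LF}_{j−1/2} = max{α_max(Ū_{j−1}), α_max(Ū_j)} and α^{LF}_{j+1/2} = max{α_max(Ū_j), α_max(Ū_{j+1})}, and let p^{e,⋆}_{j−1/2}, p^{e,⋆}_{j+1/2} ∈ ℝ. Define the modified Lax–Friedrichs fluxes F̂_{j+1/2} = ½[F(Ū_j) + F(Ū_{j+1}) − α^{LF}_{j+1/2} ρ^{e,max}_{j+1/2} (Ū_{j+1}/ρ̄^e_{j+1} − Ū_j/ρ̄^e_j)] and F̂_{j−1/2} = ½[F(Ū_{j−1}) + F(Ū_j) − α^{LF}_{j−1/2} ρ^{e,max}_{j−1/2} (Ū_j/ρ̄^e_j − Ū_{j−1}/ρ̄^e_{j−1})],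 the discretized source S̄_j = ((p^{e,⋆}_{j+1/2} − p^{e,⋆}_{j−1/2})/(h ρ̄^e_j)) · (0, ρ̄_j, m̄_j), the specific internal energy ē_j = (Ē_j − m̄_j²/(2ρ̄_j))/ρ̄_j, and α̂_j = (α^{LF}_{j−1/2} ρ^{e,max}_{j−1/2} + α^{LF}_{j+1/2} ρ^{e,max}_{j+1/2})/(2ρ̄^e_j) + |p^{e,⋆}_{j+1/2} − p^{e,⋆}_{j−1/2}|/(ρ̄^e_j √(2ē_j)). If Δt > 0 and h > 0 satisfy α̂_j Δt ≤ h, then Ū_j − (Δt/h)(F̂_{j+1/2} − F̂_{j−1/2}) + Δt·S̄_j ∈ G. -/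

import Mathlib

noncomputable section

/-- A 1D state `U = (ρ, m, E)`. -/
abbrev St : Type := ℝ × ℝ × ℝ

/-- The admissible set `G = {(ρ, m, E) : ρ > 0, E − m²/(2ρ) > 0}`. -/
def admG : Set St := {U | 0 < U.1 ∧ 0 < U.2.2 - U.2.1 ^ 2 / (2 * U.1)}

/-- The velocity `u = m/ρ`. -/
def vel (U : St) : ℝ := U.2.1 / U.1

/-- The pressure `p = (γ−1)(E − m²/(2ρ))`. -/
def press (γ : ℝ) (U : St) : ℝ := (γ - 1) * (U.2.2 - U.2.1 ^ 2 / (2 * U.1))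

/-- The specific internal energy `e = (E − m²/(2ρ))/ρ`. -/
def specE (U : St) : ℝ := (U.2.2 - U.2.1 ^ 2 / (2 * U.1)) / U.1

/-- The Euler flux `F(U) = (ρu, ρu² + p, (E+p)u)`. -/
def eulerF (γ : ℝ) (U : St) : St :=
  (U.1 * vel U, U.1 * vel U ^ 2 + press γ U, (U.2.2 + press γ U) * vel U)

/-- `α_max(U) = |u| + √(γp/ρ)`. -/
def alphaMax (γ : ℝ) (U : St) : ℝ := |vel U| + Real.sqrt (γ * press γ U / U.1)

end

/-!
The update is a combination, with nonnegative coefficients, of three states: the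
Lax–Friedrichs states `U_{j+1} − a_{j+1}⁻¹ F(U_{j+1})` and `U_{j−1} + a_{j−1}⁻¹ F(U_{j−1})`,
where `a = α^{LF} ρ^{e,max} / ρ̄^e ≥ α_max`, and the remainder `κ U_j + β (0, ρ̄_j, m̄_j)`
carrying the source. In the variables `(ρ, m, E)` the set `G` is the open convex cone
`ρ > 0, m² < 2ρE`. A state `U + t F(U)` stays in `G` as long as `|t| α_max(U) ≤ 1`, and the
remainder lies in the closed cone exactly when `|β| ≤ κ √(2 ē_j)`, which is what the CFL
condition says.
-/

def admGClosure : Set St := {U | 0 ≤ U.1 ∧ 0 ≤ U.2.2 ∧ U.2.1 ^ 2 ≤ 2 * U.1 * U.2.2}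

theorem mem_admG_iff {U : St} : U ∈ admG ↔ 0 < U.1 ∧ U.2.1 ^ 2 < 2 * U.1 * U.2.2 := by
  refine and_congr_right fun hρ => ?_
  rw [sub_pos, div_lt_iff₀ (by positivity)]
  ring_nf

theorem admG_subset_admGClosure : admG ⊆ admGClosure := by
  intro U hU
  rw [mem_admG_iff] at hU
  obtain ⟨hρ, hdisc⟩ := hU
  exact ⟨hρ.le, by nlinarith [sq_nonneg U.2.1], hdisc.le⟩

theorem smul_mem_admG {c : ℝ} {U : St} (hc : 0 < c) (hU : U ∈ admG) : c • U ∈ admG := by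
  rw [mem_admG_iff] at hU ⊢
  obtain ⟨hρ, hdisc⟩ := hU
  refine ⟨mul_pos hc hρ, ?_⟩
  simp only [Prod.smul_fst, Prod.smul_snd, smul_eq_mul]
  nlinarith [mul_pos hc hc]

theorem add_mem_admG_of_mem_admGClosure {U V : St} (hU : U ∈ admG) (hV : V ∈ admGClosure) :
    U + V ∈ admG := by
  obtain ⟨ρ, m, E⟩ := U
  obtain ⟨ρ', m', E'⟩ := V
  rw [mem_admG_iff] at hU ⊢
  obtain ⟨hρ, hdisc⟩ := hU
  obtain ⟨hρ', hE', hdisc'⟩ := hV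
  have hE : 0 < E := by nlinarith [sq_nonneg m]
  -- `(m m')² ≤ (2ρE)(2ρ'E') = 4(ρE')(ρ'E) ≤ (ρE' + ρ'E)²` by AM–GM
  have hcross : m * m' ≤ ρ * E' + ρ' * E := by
    have hsq : (m * m') ^ 2 ≤ (ρ * E' + ρ' * E) ^ 2 := by
      nlinarith [mul_le_mul hdisc.le hdisc' (sq_nonneg m') (by positivity),
        sq_nonneg (ρ * E' - ρ' * E)]
    exact (le_abs_self _).trans (abs_le_of_sq_le_sq hsq (by positivity))
  refine ⟨by simp only [Prod.fst_add]; linarith, ?_⟩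
  simp only [Prod.fst_add, Prod.snd_add]
  nlinarith

theorem add_mem_admG {U V : St} (hU : U ∈ admG) (hV : V ∈ admG) : U + V ∈ admG :=
  add_mem_admG_of_mem_admGClosure hU (admG_subset_admGClosure hV)

theorem specE_pos {U : St} (hU : U ∈ admG) : 0 < specE U :=
  div_pos hU.2 hU.1

theorem alphaMax_pos {γ : ℝ} {U : St} (hγ : 1 < γ) (hU : U ∈ admG) : 0 < alphaMax γ U := by
  have hp : 0 < press γ U := mul_pos (by linarith) hU.2
  have := Real.sqrt_pos.2 (div_pos (mul_pos (by linarith : (0 : ℝ) < γ) hp) hU.1)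
  exact add_pos_of_nonneg_of_pos (abs_nonneg _) this

theorem add_smul_eulerF_mem_admG {γ t : ℝ} {U : St} (hγ : 1 < γ) (hU : U ∈ admG)
    (ht : |t| * alphaMax γ U ≤ 1) : U + t • eulerF γ U ∈ admG := by
  rcases eq_or_ne t 0 with rfl | ht0
  · simpa using hU
  obtain ⟨ρ, m, E⟩ := U
  obtain ⟨hρ, hD⟩ := hU
  set D := E - m ^ 2 / (2 * ρ) with hD_def
  set u := m / ρ with hu
  have hm : m = ρ * u := by rw [hu]; field_simp
  have hE : E = D + ρ * u ^ 2 / 2 := by rw [hD_def, hm]; field_simp; ring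
  set c := Real.sqrt (γ * ((γ - 1) * D) / ρ) with hc
  have hc2 : c ^ 2 * ρ = γ * ((γ - 1) * D) := by
    rw [hc, Real.sq_sqrt (by positivity), div_mul_cancel₀ _ hρ.ne']
  have hc0 : 0 < c := Real.sqrt_pos.2 (by positivity)
  change |t| * (|u| + c) ≤ 1 at ht
  have hspeed : |t| * c ≤ 1 + t * u := by
    have := neg_abs_le (t * u)
    rw [abs_mul] at this
    nlinarith [abs_nonneg t]
  have hρ' : 0 < 1 + t * u := (mul_pos (abs_pos.2 ht0) hc0).trans_le hspeed
  -- `(1 + t u)² ≥ t² c² = t² γ p / ρ`, and `2γ > γ - 1`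
  have hdisc : (t * ((γ - 1) * D)) ^ 2 < 2 * (1 + t * u) ^ 2 * ρ * D := by
    have := pow_le_pow_left₀ (by positivity) hspeed 2
    rw [mul_pow, sq_abs] at this
    have hlow : 2 * (t ^ 2 * (γ * ((γ - 1) * D))) * D ≤ 2 * (1 + t * u) ^ 2 * ρ * D := by
      rw [← hc2]; nlinarith [mul_pos hρ hD]
    have hgap : 0 < t ^ 2 * ((γ - 1) * (γ + 1)) * D ^ 2 := by
      have : 0 < t ^ 2 := by positivity
      have : 0 < (γ - 1) * (γ + 1) := mul_pos (by linarith) (by linarith)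
      positivity
    nlinarith
  rw [mem_admG_iff]
  change 0 < ρ + t * (ρ * u) ∧ (m + t * (ρ * u ^ 2 + (γ - 1) * D)) ^ 2
    < 2 * (ρ + t * (ρ * u)) * (E + t * ((E + (γ - 1) * D) * u))
  rw [hm, hE]
  have hdisc_eq : 2 * (ρ + t * (ρ * u))
        * (D + ρ * u ^ 2 / 2 + t * ((D + ρ * u ^ 2 / 2 + (γ - 1) * D) * u))
      - (ρ * u + t * (ρ * u ^ 2 + (γ - 1) * D)) ^ 2
      = 2 * (1 + t * u) ^ 2 * ρ * D - (t * ((γ - 1) * D)) ^ 2 := by ring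
  exact ⟨by linarith [mul_pos hρ hρ'], by linarith⟩

theorem sub_inv_smul_eulerF_mem_admG {γ α : ℝ} {U : St} (hγ : 1 < γ) (hU : U ∈ admG)
    (hα : alphaMax γ U ≤ α) : U - α⁻¹ • eulerF γ U ∈ admG := by
  have hα0 := (alphaMax_pos hγ hU).trans_le hα
  rw [sub_eq_add_neg, ← neg_smul]
  refine add_smul_eulerF_mem_admG hγ hU ?_
  rwa [abs_neg, abs_inv, abs_of_pos hα0, inv_mul_le_one₀ hα0]

theorem add_inv_smul_eulerF_mem_admG {γ α : ℝ} {U : St} (hγ : 1 < γ) (hU : U ∈ admG)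
    (hα : alphaMax γ U ≤ α) : U + α⁻¹ • eulerF γ U ∈ admG := by
  have hα0 := (alphaMax_pos hγ hU).trans_le hα
  refine add_smul_eulerF_mem_admG hγ hU ?_
  rwa [abs_inv, abs_of_pos hα0, inv_mul_le_one₀ hα0]

theorem smul_add_smul_mem_admGClosure {κ β : ℝ} {U : St} (hU : U ∈ admG)
    (hβ : |β| ≤ κ * Real.sqrt (2 * specE U)) :
    κ • U + β • ((0 : ℝ), U.1, U.2.1) ∈ admGClosure := by
  obtain ⟨ρ, m, E⟩ := U
  have hρ : 0 < ρ := hU.1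
  set S := Real.sqrt (2 * specE (ρ, m, E)) with hS
  have hS0 : 0 < S := Real.sqrt_pos.2 (by linarith [specE_pos hU])
  have hS2 : S ^ 2 * ρ ^ 2 = 2 * ρ * E - m ^ 2 := by
    rw [hS, Real.sq_sqrt (by linarith [specE_pos hU])]
    simp only [specE]
    field_simp
  have hκ : 0 ≤ κ := nonneg_of_mul_nonneg_left ((abs_nonneg β).trans hβ) hS0
  have hβ2 : β ^ 2 ≤ κ ^ 2 * S ^ 2 := by
    rw [← mul_pow, ← sq_abs β]
    exact pow_le_pow_left₀ (abs_nonneg β) hβ 2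
  simp only [Prod.smul_mk, Prod.mk_add_mk, smul_eq_mul, mul_zero, add_zero]
  have hdisc : 2 * (κ * ρ) * (κ * E + β * m) - (κ * m + β * ρ) ^ 2
      = ρ ^ 2 * (κ ^ 2 * S ^ 2 - β ^ 2) := by linear_combination (-κ ^ 2) * hS2
  rcases hκ.eq_or_lt with rfl | hκ0
  · obtain rfl : β = 0 := by simpa using hβ
    simp [admGClosure]
  have hquad : (κ * m + β * ρ) ^ 2 ≤ 2 * (κ * ρ) * (κ * E + β * m) := by
    linarith [mul_nonneg (sq_nonneg ρ) (sub_nonneg.2 hβ2)]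
  have hE : 0 ≤ 2 * (κ * ρ) * (κ * E + β * m) := (sq_nonneg _).trans hquad
  exact ⟨by positivity, nonneg_of_mul_nonneg_right hE (by positivity), hquad⟩

theorem abs_source_le_of_cfl {A Δp ρe S Δt h : ℝ} (hρe : 0 < ρe) (hS : 0 < S) (hΔt : 0 < Δt)
    (hh : 0 < h) (hcfl : (A / (2 * ρe) + |Δp| / (ρe * S)) * Δt ≤ h) :
    |Δt * (Δp / (h * ρe))| ≤ (1 - Δt / h * (A / (2 * ρe))) * S := by
  have hgap : (1 - Δt / h * (A / (2 * ρe))) * S - |Δt * (Δp / (h * ρe))|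
      = S / h * (h - (A / (2 * ρe) + |Δp| / (ρe * S)) * Δt) := by
    rw [abs_mul, abs_div, abs_of_pos hΔt, abs_of_pos (mul_pos hh hρe)]
    field_simp
    ring
  nlinarith [mul_nonneg (div_pos hS hh).le (sub_nonneg.2 hcfl)]

theorem lf_update_eq_combination {K M : Type*} [Field K] [AddCommGroup M] [Module K M]
    {U₁ U₂ U₃ F₁ F₂ F₃ W : M} {Δt h a₁ a₃ ρ₁ ρ₂ ρ₃ σ : K}
    (h₁ : a₁ / ρ₁ ≠ 0) (h₃ : a₃ / ρ₃ ≠ 0) :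
    U₂ - (Δt / h) • ((1 / 2 : K) • (F₂ + F₃ - a₃ • (ρ₃⁻¹ • U₃ - ρ₂⁻¹ • U₂))
        - (1 / 2 : K) • (F₁ + F₂ - a₁ • (ρ₂⁻¹ • U₂ - ρ₁⁻¹ • U₁))) + Δt • (σ • W)
      = (Δt / h * (a₃ / ρ₃) / 2) • (U₃ - (a₃ / ρ₃)⁻¹ • F₃)
        + (Δt / h * (a₁ / ρ₁) / 2) • (U₁ + (a₁ / ρ₁)⁻¹ • F₁)
        + ((1 - Δt / h * ((a₁ + a₃) / (2 * ρ₂))) • U₂ + (Δt * σ) • W) := by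
  have e₁ : (Δt / h * (a₁ / ρ₁) / 2) • (U₁ + (a₁ / ρ₁)⁻¹ • F₁)
      = (Δt / h * (a₁ / ρ₁) / 2) • U₁ + (Δt / h / 2) • F₁ := by
    rw [smul_add, smul_smul, mul_div_right_comm, mul_inv_cancel_right₀ h₁]
  have e₃ : (Δt / h * (a₃ / ρ₃) / 2) • (U₃ - (a₃ / ρ₃)⁻¹ • F₃)
      = (Δt / h * (a₃ / ρ₃) / 2) • U₃ - (Δt / h / 2) • F₃ := by
    rw [smul_sub, smul_smul, mul_div_right_comm, mul_inv_cancel_right₀ h₃]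
  rw [e₁, e₃]
  module

/-- Theorem B.1: positivity of the first-order well-balanced DG
scheme with the modified Lax–Friedrichs flux (isothermal case). -/
theorem first_order_WB_LF_positivity (γ : ℝ) (hγ : 1 < γ)
    (Ujm Uj Ujp : St) (hUjm : Ujm ∈ admG) (hUj : Uj ∈ admG) (hUjp : Ujp ∈ admG)
    (ρejm ρej ρejp : ℝ) (hρejm : 0 < ρejm) (hρej : 0 < ρej) (hρejp : 0 < ρejp)
    (ρmaxl ρmaxr : ℝ) (hρmaxl : max ρejm ρej ≤ ρmaxl) (hρmaxr : max ρej ρejp ≤ ρmaxr)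
    (pstl pstr : ℝ)
    (Δt h : ℝ) (hΔt : 0 < Δt) (hh : 0 < h)
    (hcfl :
      ((max (alphaMax γ Ujm) (alphaMax γ Uj) * ρmaxl
          + max (alphaMax γ Uj) (alphaMax γ Ujp) * ρmaxr) / (2 * ρej)
        + |pstr - pstl| / (ρej * Real.sqrt (2 * specE Uj))) * Δt ≤ h) :
    Uj - (Δt / h) •
        ((1 / 2 : ℝ) • (eulerF γ Uj + eulerF γ Ujp
            - (max (alphaMax γ Uj) (alphaMax γ Ujp) * ρmaxr) •
                (ρejp⁻¹ • Ujp - ρej⁻¹ • Uj))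
          - (1 / 2 : ℝ) • (eulerF γ Ujm + eulerF γ Uj
            - (max (alphaMax γ Ujm) (alphaMax γ Uj) * ρmaxl) •
                (ρej⁻¹ • Uj - ρejm⁻¹ • Ujm)))
      + Δt • (((pstr - pstl) / (h * ρej)) • (((0 : ℝ), Uj.1, Uj.2.1) : St)) ∈ admG := by
  
  set αl := max (alphaMax γ Ujm) (alphaMax γ Uj)
  set αr := max (alphaMax γ Uj) (alphaMax γ Ujp)
  have hαl : 0 < αl := (alphaMax_pos hγ hUj).trans_le (le_max_right _ _)
  have hαr : 0 < αr := (alphaMax_pos hγ hUj).trans_le (le_max_left _ _)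
  have hρejm_le : ρejm ≤ ρmaxl := (le_max_left _ _).trans hρmaxl
  have hρejp_le : ρejp ≤ ρmaxr := (le_max_right _ _).trans hρmaxr
  have hρmaxl0 : 0 < ρmaxl := hρejm.trans_le hρejm_le
  have hρmaxr0 : 0 < ρmaxr := hρejp.trans_le hρejp_le
  rw [lf_update_eq_combination (by positivity) (by positivity)]
  refine add_mem_admG_of_mem_admGClosure
    (add_mem_admG (smul_mem_admG (by positivity) (sub_inv_smul_eulerF_mem_admG hγ hUjp ?_))
      (smul_mem_admG (by positivity) (add_inv_smul_eulerF_mem_admG hγ hUjm ?_)))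
    (smul_add_smul_mem_admGClosure hUj ?_)
  · calc alphaMax γ Ujp ≤ αr := le_max_right _ _
      _ ≤ αr * ρmaxr / ρejp := by rw [le_div_iff₀ hρejp]; gcongr
  · calc alphaMax γ Ujm ≤ αl := le_max_left _ _
      _ ≤ αl * ρmaxl / ρejm := by rw [le_div_iff₀ hρejm]; gcongr
  · exact abs_source_le_of_cfl hρej (Real.sqrt_pos.2 (by linarith [specE_pos hUj])) hΔt hh hcfl
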